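/- arXiv:2302.03451 — 3 statements merged into one kernel-verified Lean document; each statement's English description precedes it below -/
import Mathlib

section
/- A finite metric space (S,d) admits a 2-solidarity-r-cover (i.e., a partition of S into two disjoint subsets each of which is an r-cover) if and only if every point of S has a neighbor: for all s in S there exists s' in S with s' ≠ s and d(s,s') ≤ r. -/
def IsCover {α : Type*} [MetricSpace α] (r : ℝ) (T : Set α) : Prop :=
  ∀ s : α, ∃ t ∈ T, dist s t ≤ r

/-!
Take a maximal set `A` in which every point has an `r`-neighbour outside `A` (the empty set is
such a set, and `α` is finite). Every point of `A` is then covered by `Aᶜ`. A point `s ∉ A` is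
covered by `A`: since `insert s A` is not such a set, either `s` has no neighbour outside
`insert s A`, so its neighbour lies in `A`, or some `a ∈ A` has all its neighbours in `insert s A`,
so its neighbour outside `A` is `s` itself.
-/

section Domination

variable {β : Type*} {R : β → β → Prop}

theorem forall_notMem_exists_mem_of_maximal (hsymm : ∀ a b, R a b → R b a)
    (hnbr : ∀ a, ∃ b, b ≠ a ∧ R a b) {A : Set β}
    (hA : Maximal (fun B : Set β ↦ ∀ a ∈ B, ∃ b ∉ B, R a b) A) :
    ∀ s ∉ A, ∃ b ∈ A, R s b := by
  intro s hs
  have hins : ¬ ∀ a ∈ insert s A, ∃ b ∉ insert s A, R a b := fun h ↦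
    hs (hA.mem_of_prop_insert h)
  push Not at hins
  obtain ⟨a, ha, hall⟩ := hins
  rcases Set.mem_insert_iff.mp ha with rfl | haA
  · obtain ⟨b, hba, hab⟩ := hnbr a
    have hb : b ∈ insert a A := by_contra fun hb ↦ hall b hb hab
    exact ⟨b, (Set.mem_insert_iff.mp hb).resolve_left hba, hab⟩
  · obtain ⟨b, hbA, hab⟩ := hA.prop a haA
    have hb : b ∈ insert s A := by_contra fun hb ↦ hall b hb hab
    obtain rfl := (Set.mem_insert_iff.mp hb).resolve_right hbA
    exact ⟨a, haA, hsymm _ _ hab⟩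

theorem exists_set_forall_notMem_exists_mem_and_forall_mem_exists_notMem [Finite β]
    (hsymm : ∀ a b, R a b → R b a) (hnbr : ∀ a, ∃ b, b ≠ a ∧ R a b) :
    ∃ A : Set β, (∀ s ∉ A, ∃ b ∈ A, R s b) ∧ ∀ a ∈ A, ∃ b ∉ A, R a b := by
  obtain ⟨A, hA⟩ := (Set.toFinite {B : Set β | ∀ a ∈ B, ∃ b ∉ B, R a b}).exists_maximal
    ⟨∅, fun _ h ↦ h.elim⟩
  exact ⟨A, forall_notMem_exists_mem_of_maximal hsymm hnbr hA, hA.prop⟩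

end Domination

section Cover

variable {α : Type*} [MetricSpace α] {r : ℝ} {S T : Set α}

theorem isCover_of_forall_notMem (hr : 0 ≤ r) (h : ∀ s ∉ T, ∃ t ∈ T, dist s t ≤ r) :
    IsCover r T := by
  intro s
  by_cases hs : s ∈ T
  · exact ⟨s, hs, by rwa [dist_self]⟩
  · exact h s hs

theorem exists_ne_dist_le_of_isCover_of_disjoint (hST : Disjoint S T) (hS : IsCover r S)
    (hT : IsCover r T) (s : α) : ∃ s', s' ≠ s ∧ dist s s' ≤ r := by
  obtain ⟨t, htS, hst⟩ := hS s
  obtain ⟨u, huT, hsu⟩ := hT s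
  by_cases hts : t = s
  · exact ⟨u, fun hus ↦ hST.ne_of_mem htS huT (hts.trans hus.symm), hsu⟩
  · exact ⟨t, hts, hst⟩

end Cover

theorem stmt_0_general {α : Type*} [MetricSpace α] [Fintype α] (r : ℝ) (hr : 0 ≤ r) :
    (∃ S₁ S₂ : Set α, Disjoint S₁ S₂ ∧ IsCover r S₁ ∧ IsCover r S₂) ↔
      ∀ s : α, ∃ s' : α, s' ≠ s ∧ dist s s' ≤ r := by
  constructor
  · rintro ⟨S₁, S₂, hd, h₁, h₂⟩
    exact exists_ne_dist_le_of_isCover_of_disjoint hd h₁ h₂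
  · intro h
    have hsymm (a b : α) (hab : dist a b ≤ r) : dist b a ≤ r := by rwa [dist_comm]
    obtain ⟨A, hout, hin⟩ :=
      exists_set_forall_notMem_exists_mem_and_forall_mem_exists_notMem hsymm h
    exact ⟨A, Aᶜ, disjoint_compl_right, isCover_of_forall_notMem hr hout,
      isCover_of_forall_notMem hr fun s hs ↦ hin s (not_not.mp hs)⟩

theorem stmt_0 {α : Type*} [MetricSpace α] [Fintype α] [Nonempty α] (r : ℝ) (hr : 0 ≤ r) :
    (∃ S₁ S₂ : Set α, Disjoint S₁ S₂ ∧ IsCover r S₁ ∧ IsCover r S₂) ↔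
      ∀ s : α, ∃ s' : α, s' ≠ s ∧ dist s s' ≤ r :=
  stmt_0_general r hr
end

section
/- Let (S,d) be a finite metric space, r > 0, and let P = {p₁,…,pₖ} ⊆ S with pairwise distances > 2r such that every point of S is within distance 2r of P. If |B_r(pᵢ)| ≥ m for every i, then S admits an m-solidarity-3r-cover: there exist m pairwise disjoint subsets S₁,…,S_m of S, each a 3r-cover of S. -/
open Function Set

theorem exists_injective_fin_of_le_ncard {α : Type*} {s : Set α} {m : ℕ} (h : m ≤ s.ncard) :
    ∃ f : Fin m → α, Injective f ∧ ∀ j, f j ∈ s := by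
  obtain ⟨e⟩ : Nonempty (Fin m ↪ s) := by
    rcases s.finite_or_infinite with hs | hs
    · have := hs.fintype
      exact Embedding.nonempty_of_card_le (by
        rwa [Fintype.card_fin, ← Nat.card_eq_fintype_card, Nat.card_coe_set_eq])
    · exact ⟨Fin.valEmbedding.trans hs.to_subtype.natEmbedding⟩
  exact ⟨fun j => e j, Subtype.val_injective.comp e.injective, fun j => (e j).2⟩

theorem pairwise_disjoint_range_transversal {ι κ α : Type*} {B : ι → Set α}
    (hB : Pairwise (Disjoint on B)) {g : ι → κ → α} (hg : ∀ i, Injective (g i))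
    (hgB : ∀ i j, g i j ∈ B i) :
    Pairwise (Disjoint on fun j => range fun i => g i j) := by
  intro j j' hjj'
  rw [onFun, Set.disjoint_left]
  rintro _ ⟨i, rfl⟩ ⟨i', hi' : g i' j' = g i j⟩
  obtain rfl : i' = i := hB.eq (not_disjoint_iff.2 ⟨g i j, hi' ▸ hgB i' j', hgB i j⟩)
  exact hjj' (hg i' hi').symm

theorem IsCover.trans {α : Type*} [MetricSpace α] {r r' : ℝ} {P T : Set α} (hP : IsCover r P)
    (hT : ∀ p ∈ P, ∃ t ∈ T, dist p t ≤ r') : IsCover (r + r') T := by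
  intro s
  obtain ⟨p, hp, hsp⟩ := hP s
  obtain ⟨t, ht, hpt⟩ := hT p hp
  exact ⟨t, ht, (dist_triangle s p t).trans (add_le_add hsp hpt)⟩

theorem stmt_6_general {α : Type*} [MetricSpace α] (r : ℝ) (m k : ℕ)
    (p : Fin k → α)
    (hsep : ∀ i j : Fin k, i ≠ j → 2 * r < dist (p i) (p j))
    (hcov : ∀ s : α, ∃ i : Fin k, dist s (p i) ≤ 2 * r)
    (hball : ∀ i : Fin k, m ≤ (Metric.closedBall (p i) r).ncard) :
    ∃ F : Fin m → Set α, Pairwise (Function.onFun Disjoint F) ∧ ∀ i, IsCover (3 * r) (F i) := by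
  choose g hg hgB using fun i => exists_injective_fin_of_le_ncard (hball i)
  have hdisj : Pairwise (Disjoint on fun i => Metric.closedBall (p i) r) := fun i j hij =>
    Metric.closedBall_disjoint_closedBall (by linarith [hsep i j hij])
  refine ⟨fun j => range fun i => g i j, pairwise_disjoint_range_transversal hdisj hg hgB,
    fun j => ?_⟩
  have hcenters : IsCover (2 * r) (range p) := fun s =>
    let ⟨i, hi⟩ := hcov s
    ⟨p i, mem_range_self i, hi⟩
  rw [show 3 * r = 2 * r + r by ring]
  refine hcenters.trans ?_
  rintro _ ⟨i, rfl⟩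
  exact ⟨g i j, mem_range_self i, dist_comm (g i j) (p i) ▸ hgB i j⟩

theorem stmt_6 {α : Type*} [MetricSpace α] [Fintype α] (r : ℝ) (hr : 0 < r) (m k : ℕ)
    (p : Fin k → α)
    (hsep : ∀ i j : Fin k, i ≠ j → 2 * r < dist (p i) (p j))
    (hcov : ∀ s : α, ∃ i : Fin k, dist s (p i) ≤ 2 * r)
    (hball : ∀ i : Fin k, m ≤ (Metric.closedBall (p i) r).ncard) :
    ∃ F : Fin m → Set α, Pairwise (Function.onFun Disjoint F) ∧ ∀ i, IsCover (3 * r) (F i) :=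
  stmt_6_general r m k p hsep hcov hball
end

section
/- In the plane divided into an axis-aligned grid of squares of side length r/√2 (diameter r), any closed disc of radius r intersects at most 16 grid squares. -/
/-
The disc lies in the square `[c₀ - r, c₀ + r] × [c₁ - r, c₁ + r]`. In each coordinate the interval
`[cᵢ - r, cᵢ + r]` has length `2r = 2√2 · s < 3s`, where `s = r/√2` is the side of the grid squares,
so it meets at most four of the half-open intervals `[ks, (k+1)s)`. Hence at most `4 · 4` squares
meet the disc.
-/

/-- The half-open grid square indexed by `q : ℤ × ℤ` with side length `s`. -/
def gridSq (s : ℝ) (q : ℤ × ℤ) : Set (EuclideanSpace ℝ (Fin 2)) :=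
  {x | x 0 ∈ Set.Ico (q.1 * s) ((q.1 + 1) * s) ∧ x 1 ∈ Set.Ico (q.2 * s) ((q.2 + 1) * s)}

open Finset

lemma floor_div_eq_of_mem_Ico {s u : ℝ} {k : ℤ} (hs : 0 < s)
    (hu : u ∈ Set.Ico (k * s) ((k + 1) * s)) : ⌊u / s⌋ = k := by
  rw [Int.floor_eq_iff, le_div_iff₀ hs, div_lt_iff₀ hs]
  exact hu

lemma mem_Icc_floor_div_of_mem_Ico {s a b u : ℝ} {k : ℤ} (hs : 0 < s)
    (hu : u ∈ Set.Ico (k * s) ((k + 1) * s)) (hab : u ∈ Set.Icc a b) :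
    k ∈ Icc ⌊a / s⌋ ⌊b / s⌋ := by
  rw [← floor_div_eq_of_mem_Ico hs hu, mem_Icc]
  exact ⟨Int.floor_mono (div_le_div_of_nonneg_right hab.1 hs.le),
    Int.floor_mono (div_le_div_of_nonneg_right hab.2 hs.le)⟩

lemma card_Icc_floor_div_le {s a b : ℝ} {n : ℕ} (hs : 0 < s) (h : b - a < n * s) :
    #(Icc ⌊a / s⌋ ⌊b / s⌋) ≤ n + 1 := by
  have hlt : (⌊b / s⌋ : ℝ) < ⌊a / s⌋ + 1 + n :=
    calc (⌊b / s⌋ : ℝ) ≤ b / s := Int.floor_le _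
      _ < a / s + n := by rw [div_lt_iff₀ hs, add_mul, div_mul_cancel₀ _ hs.ne']; linarith
      _ < ⌊a / s⌋ + 1 + n := by linarith [Int.lt_floor_add_one (a / s)]
  have : ⌊b / s⌋ < ⌊a / s⌋ + 1 + n := by exact_mod_cast hlt
  rw [Int.card_Icc]
  omega

lemma setOf_gridSq_inter_closedBall_nonempty_subset {s r : ℝ} (hs : 0 < s)
    (c : EuclideanSpace ℝ (Fin 2)) :
    {q : ℤ × ℤ | (gridSq s q ∩ Metric.closedBall c r).Nonempty} ⊆
      ↑(Icc ⌊(c 0 - r) / s⌋ ⌊(c 0 + r) / s⌋ ×ˢ Icc ⌊(c 1 - r) / s⌋ ⌊(c 1 + r) / s⌋) := by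
  rintro q ⟨x, ⟨hx0, hx1⟩, hxc⟩
  have hcoord (i : Fin 2) : x i ∈ Set.Icc (c i - r) (c i + r) := by
    have := (PiLp.dist_apply_le x c i).trans (Metric.mem_closedBall.mp hxc)
    rw [Real.dist_eq, abs_le] at this
    constructor <;> linarith [this.1, this.2]
  rw [coe_product, Set.mem_prod]
  exact ⟨mem_Icc_floor_div_of_mem_Ico hs hx0 (hcoord 0),
    mem_Icc_floor_div_of_mem_Ico hs hx1 (hcoord 1)⟩

lemma ncard_setOf_gridSq_inter_closedBall_nonempty_le {s r : ℝ} {n : ℕ} (hs : 0 < s)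
    (h : 2 * r < n * s) (c : EuclideanSpace ℝ (Fin 2)) :
    {q : ℤ × ℤ | (gridSq s q ∩ Metric.closedBall c r).Nonempty}.ncard ≤ (n + 1) ^ 2 := by
  have hwidth (t : ℝ) : #(Icc ⌊(t - r) / s⌋ ⌊(t + r) / s⌋) ≤ n + 1 :=
    card_Icc_floor_div_le hs (by linarith)
  calc _ ≤ (↑(Icc ⌊(c 0 - r) / s⌋ ⌊(c 0 + r) / s⌋ ×ˢ Icc ⌊(c 1 - r) / s⌋ ⌊(c 1 + r) / s⌋) :
          Set (ℤ × ℤ)).ncard :=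
        Set.ncard_le_ncard (setOf_gridSq_inter_closedBall_nonempty_subset hs c) (finite_toSet _)
    _ = #(Icc ⌊(c 0 - r) / s⌋ ⌊(c 0 + r) / s⌋) * #(Icc ⌊(c 1 - r) / s⌋ ⌊(c 1 + r) / s⌋) := by
        rw [Set.ncard_coe_finset, card_product]
    _ ≤ (n + 1) ^ 2 := by rw [sq]; exact Nat.mul_le_mul (hwidth _) (hwidth _)

theorem stmt_9 (r : ℝ) (hr : 0 < r) (c : EuclideanSpace ℝ (Fin 2)) :
    {q : ℤ × ℤ | (gridSq (r / Real.sqrt 2) q ∩ Metric.closedBall c r).Nonempty}.ncard ≤ 16 := by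
  have hsqrt : Real.sqrt 2 * Real.sqrt 2 = 2 := Real.mul_self_sqrt zero_le_two
  have hs : 0 < r / Real.sqrt 2 := by positivity
  have hwidth : 2 * r < ((3 : ℕ) : ℝ) * (r / Real.sqrt 2) := by
    rw [mul_div_assoc', lt_div_iff₀ (by positivity)]
    push_cast
    nlinarith [Real.sqrt_nonneg 2]
  simpa using ncard_setOf_gridSq_inter_closedBall_nonempty_le hs hwidth c
end
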